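/- arXiv:1812.02039 — 2 statements merged into one kernel-verified Lean document; each statement's English description precedes it below -/
import Mathlib

section
/- Let E be a plain almost minimal set of dimension d = n−1 in an open set U ⊆ ℝⁿ with gauge function h, and let B̄(x,r) be a closed ball contained in U. Then H^{n-1}(E ∩ B̄(x,r)) ≤ σ_{n-1} r^{n-1} + h(r) r^{n-1}, where σ_{n-1} = H^{n-1}(∂B(0,1)) is the (n−1)-dimensional Hausdorff measure of the unit sphere of ℝⁿ. -/
open Set Metric MeasureTheory Filter
open scoped ENNReal NNReal RealInnerProductSpace

attribute [local instance] Classical.propDecidable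

noncomputable section

variable {n : ℕ}

/-- A (plain) deformation `φ` of the set `E` in the set `B`:
a one-parameter family of maps, continuous on `E × [0,1]`, starting from the identity,
equal to the identity outside of `B`, mapping `E ∩ B` into `B`, and whose endpoint is
Lipschitz. -/
def IsDeformationIn (E B : Set (EuclideanSpace ℝ (Fin n)))
    (φ : ℝ → EuclideanSpace ℝ (Fin n) → EuclideanSpace ℝ (Fin n)) : Prop :=
  ContinuousOn (fun p : ℝ × EuclideanSpace ℝ (Fin n) => φ p.1 p.2) (Icc (0:ℝ) 1 ×ˢ E) ∧
  (∀ y ∈ E, φ 0 y = y) ∧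
  (∀ t ∈ Icc (0:ℝ) 1, ∀ y ∈ E \ B, φ t y = y) ∧
  (∀ t ∈ Icc (0:ℝ) 1, φ t '' (E ∩ B) ⊆ B) ∧
  (∃ K : ℝ≥0, LipschitzOnWith K (φ 1) E)

/-- A gauge function: nondecreasing on `(0,∞)` and tending to `0` at `0⁺`. -/
def IsGauge (h : ℝ → ℝ≥0∞) : Prop :=
  (∀ ⦃s t : ℝ⦄, 0 < s → s ≤ t → h s ≤ h t) ∧
  Tendsto h (nhdsWithin 0 (Ioi 0)) (nhds 0)

/-- `E` is a plain almost minimal set of dimension `d` in `U` with gauge `h`. -/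
def IsPlainAlmostMinimal (d : ℕ) (U : Set (EuclideanSpace ℝ (Fin n)))
    (h : ℝ → ℝ≥0∞) (E : Set (EuclideanSpace ℝ (Fin n))) : Prop :=
  E ⊆ U ∧ closure E ∩ U ⊆ E ∧
  (∀ (x : EuclideanSpace ℝ (Fin n)) (r : ℝ), μH[(d:ℝ)] (E ∩ ball x r) < ⊤) ∧
  ∀ (x : EuclideanSpace ℝ (Fin n)) (r : ℝ)
    (φ : ℝ → EuclideanSpace ℝ (Fin n) → EuclideanSpace ℝ (Fin n)),
    0 < r → closedBall x r ⊆ U → IsDeformationIn E (closedBall x r) φ →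
    μH[(d:ℝ)] (E ∩ closedBall x r) ≤
      μH[(d:ℝ)] ((φ 1 '' E) ∩ closedBall x r) + h r * ENNReal.ofReal r ^ d

/-- `E` is a plain minimal set of dimension `d` in `U` (gauge `h ≡ 0`). -/
def IsPlainMinimal (d : ℕ) (U E : Set (EuclideanSpace ℝ (Fin n))) : Prop :=
  IsPlainAlmostMinimal d U (fun _ => 0) E

/-- `E` is coral: every ball centered on `E` meets `E` in positive `H^d` measure. -/
def IsCoral (d : ℕ) (E : Set (EuclideanSpace ℝ (Fin n))) : Prop :=
  ∀ y ∈ E, ∀ ρ : ℝ, 0 < ρ → 0 < μH[(d:ℝ)] (E ∩ ball y ρ)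

/-- The normalized local Hausdorff distance `d_{x,r}(E,F)`. -/
def locHausDist (x : EuclideanSpace ℝ (Fin n)) (r : ℝ)
    (E F : Set (EuclideanSpace ℝ (Fin n))) : ℝ :=
  r⁻¹ * (⨆ y : ↥(F ∩ ball x r), infDist y.1 E) +
  r⁻¹ * (⨆ y : ↥(E ∩ ball x r), infDist y.1 F)

/-- Local convergence of a sequence of closed sets in `U`. -/
def ConvergesLocallyIn (U : Set (EuclideanSpace ℝ (Fin n)))
    (Ek : ℕ → Set (EuclideanSpace ℝ (Fin n)))
    (Elim : Set (EuclideanSpace ℝ (Fin n))) : Prop :=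
  ∀ (x : EuclideanSpace ℝ (Fin n)) (r : ℝ), 0 < r → closedBall x r ⊆ U →
    Tendsto (fun k => locHausDist x r (Ek k) Elim) atTop (nhds 0)

/-- `E` is `d`-rectifiable. -/
def IsRectifiableOfDim (d : ℕ) (E : Set (EuclideanSpace ℝ (Fin n))) : Prop :=
  ∃ (Z : Set (EuclideanSpace ℝ (Fin n)))
    (f : ℕ → EuclideanSpace ℝ (Fin d) → EuclideanSpace ℝ (Fin n)),
    μH[(d:ℝ)] Z = 0 ∧ (∀ i, ∃ K : ℝ≥0, LipschitzWith K (f i)) ∧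
    E ⊆ Z ∪ ⋃ i, range (f i)

/-- A cone centered at `x`. -/
def IsConeAt (x : EuclideanSpace ℝ (Fin n)) (X : Set (EuclideanSpace ℝ (Fin n))) : Prop :=
  ∀ y ∈ X, ∀ t : ℝ, 0 < t → x + t • (y - x) ∈ X

/-- A minimal cone of dimension `d` centered at `x`. -/
def IsMinimalCone (d : ℕ) (x : EuclideanSpace ℝ (Fin n))
    (X : Set (EuclideanSpace ℝ (Fin n))) : Prop :=
  IsConeAt x X ∧ IsCoral d X ∧ IsPlainMinimal d univ X

/-- `X` is a blow-up limit of `E` at `x`. -/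
def IsBlowUpLimitAt (E : Set (EuclideanSpace ℝ (Fin n))) (x : EuclideanSpace ℝ (Fin n))
    (X : Set (EuclideanSpace ℝ (Fin n))) : Prop :=
  IsClosed X ∧
  ∃ r : ℕ → ℝ, (∀ k, 0 < r k) ∧ Tendsto r atTop (nhds 0) ∧
    ∀ (z : EuclideanSpace ℝ (Fin n)) (ρ : ℝ), 0 < ρ →
      Tendsto (fun k => locHausDist z ρ ((fun y => (r k)⁻¹ • (y - x)) '' E) X)
        atTop (nhds 0)

/-- A sliding deformation of `E` in `B` with respect to the sliding boundary `Γ`. -/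
def IsSlidingDeformationIn (Γ E B : Set (EuclideanSpace ℝ (Fin n)))
    (φ : ℝ → EuclideanSpace ℝ (Fin n) → EuclideanSpace ℝ (Fin n)) : Prop :=
  IsDeformationIn E B φ ∧ ∀ t ∈ Icc (0:ℝ) 1, ∀ y ∈ E ∩ Γ, φ t y ∈ Γ

/-- `E` is a sliding almost minimal set of dimension `d` in `U`, with sliding boundary `Γ`
and gauge `h`. -/
def IsSlidingAlmostMinimal (d : ℕ) (Γ U : Set (EuclideanSpace ℝ (Fin n)))
    (h : ℝ → ℝ≥0∞) (E : Set (EuclideanSpace ℝ (Fin n))) : Prop :=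
  E ⊆ U ∧ closure E ∩ U ⊆ E ∧
  (∀ (x : EuclideanSpace ℝ (Fin n)) (r : ℝ), μH[(d:ℝ)] (E ∩ ball x r) < ⊤) ∧
  ∀ (x : EuclideanSpace ℝ (Fin n)) (r : ℝ)
    (φ : ℝ → EuclideanSpace ℝ (Fin n) → EuclideanSpace ℝ (Fin n)),
    0 < r → closedBall x r ⊆ U → IsSlidingDeformationIn Γ E (closedBall x r) φ →
    μH[(d:ℝ)] (E ∩ closedBall x r) ≤
      μH[(d:ℝ)] ((φ 1 '' E) ∩ closedBall x r) + h r * ENNReal.ofReal r ^ d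

/-- `Φ` is a `C^{1+a}` diffeomorphism from the open set `V` onto its (open) image:
`Φ` is injective and `C^1` with locally `a`-Hölder derivative on `V`, and it admits an
inverse with the same properties on the image. -/
def IsC1HolderDiffeoOn (a : ℝ) (Φ : EuclideanSpace ℝ (Fin n) → EuclideanSpace ℝ (Fin n))
    (V : Set (EuclideanSpace ℝ (Fin n))) : Prop :=
  IsOpen (Φ '' V) ∧ InjOn Φ V ∧ ContDiffOn ℝ 1 Φ V ∧
  (∀ y ∈ V, ∃ s ∈ nhdsWithin y V, ∃ C : ℝ≥0,
    HolderOnWith C a.toNNReal (fderiv ℝ Φ) s) ∧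
  ∃ Ψ : EuclideanSpace ℝ (Fin n) → EuclideanSpace ℝ (Fin n),
    (∀ y ∈ V, Ψ (Φ y) = y) ∧ ContDiffOn ℝ 1 Ψ (Φ '' V) ∧
    (∀ z ∈ Φ '' V, ∃ s ∈ nhdsWithin z (Φ '' V), ∃ C : ℝ≥0,
      HolderOnWith C a.toNNReal (fderiv ℝ Ψ) s)

/-- The closed cube of sidelength `s` in `ℝ^k`, with lower corner at the origin. -/
def unitCube (k : ℕ) (s : ℝ) : Set (EuclideanSpace ℝ (Fin k)) :=
  {y | ∀ i, y i ∈ Icc (0:ℝ) s}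

/-- The concentric cube with half the sidelength. -/
def halfCube (k : ℕ) (s : ℝ) : Set (EuclideanSpace ℝ (Fin k)) :=
  {y | ∀ i, y i ∈ Icc (s/4) (3*s/4)}

/-- `F` is totally `d`-unrectifiable. -/
def TotallyUnrectifiable (d : ℕ) (F : Set (EuclideanSpace ℝ (Fin n))) : Prop :=
  ∀ f : EuclideanSpace ℝ (Fin d) → EuclideanSpace ℝ (Fin n),
    (∃ K : ℝ≥0, LipschitzWith K f) → μH[(d:ℝ)] (F ∩ range f) = 0

/-- The closed half plane bounded by the line `ℝv` in the direction `w`. -/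
def slidingHalfPlane (v w : EuclideanSpace ℝ (Fin n)) : Set (EuclideanSpace ℝ (Fin n)) :=
  {y | ∃ t s : ℝ, 0 ≤ s ∧ y = t • v + s • w}


private lemma normalize_diff {V : Type*} [NormedAddCommGroup V] [NormedSpace ℝ V]
    {u w : V} (hu : 0 < ‖u‖) (hw : 0 < ‖w‖) :
    ‖‖u‖⁻¹ • u - ‖w‖⁻¹ • w‖ ≤ 2 * ‖u - w‖ / ‖w‖ := by
  have h1 : ‖u‖⁻¹ • u - ‖w‖⁻¹ • w = (‖u‖⁻¹ - ‖w‖⁻¹) • u + ‖w‖⁻¹ • (u - w) := by module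
  have h2 : |‖u‖⁻¹ - ‖w‖⁻¹| ≤ ‖u - w‖ / (‖u‖ * ‖w‖) := by
    have e : ‖u‖⁻¹ - ‖w‖⁻¹ = (‖w‖ - ‖u‖) / (‖u‖ * ‖w‖) := by field_simp
    rw [e, abs_div, abs_of_pos (mul_pos hu hw)]
    gcongr
    calc |‖w‖ - ‖u‖| ≤ ‖w - u‖ := abs_norm_sub_norm_le w u
    _ = ‖u - w‖ := norm_sub_rev _ _
  calc ‖‖u‖⁻¹ • u - ‖w‖⁻¹ • w‖
      ≤ ‖(‖u‖⁻¹ - ‖w‖⁻¹) • u‖ + ‖‖w‖⁻¹ • (u - w)‖ := by rw [h1]; exact norm_add_le _ _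
    _ = |‖u‖⁻¹ - ‖w‖⁻¹| * ‖u‖ + ‖w‖⁻¹ * ‖u - w‖ := by
        rw [norm_smul, norm_smul, Real.norm_eq_abs, Real.norm_eq_abs,
          abs_of_pos (inv_pos.2 hw)]
    _ ≤ (‖u - w‖ / (‖u‖ * ‖w‖)) * ‖u‖ + ‖w‖⁻¹ * ‖u - w‖ := by
        gcongr
    _ = 2 * ‖u - w‖ / ‖w‖ := by field_simp; ring

private lemma normalize_pair {V : Type*} [NormedAddCommGroup V] [NormedSpace ℝ V]
    {ρ r : ℝ} (hρ : 0 < ρ) (hρr : ρ ≤ r) {u w : V} (hu : ρ ≤ ‖u‖) (hw : ρ ≤ ‖w‖) :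
    ‖(max ‖u‖ r / ‖u‖) • u - (max ‖w‖ r / ‖w‖) • w‖ ≤ (1 + 2 * (r / ρ)) * ‖u - w‖ := by
  have hu0 : 0 < ‖u‖ := hρ.trans_le hu
  have hw0 : 0 < ‖w‖ := hρ.trans_le hw
  have hdec : (max ‖u‖ r / ‖u‖) • u - (max ‖w‖ r / ‖w‖) • w
      = (max ‖u‖ r - max ‖w‖ r) • (‖u‖⁻¹ • u)
        + (max ‖w‖ r) • (‖u‖⁻¹ • u - ‖w‖⁻¹ • w) := by
    rw [div_eq_mul_inv, div_eq_mul_inv]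
    module
  have hmw0 : 0 ≤ max ‖w‖ r := le_trans hw0.le (le_max_left _ _)
  have hmw : max ‖w‖ r ≤ (r / ρ) * ‖w‖ := by
    have h1 : (1:ℝ) ≤ r / ρ := (one_le_div hρ).2 hρr
    refine max_le ?_ ?_
    · nlinarith
    · have : (r / ρ) * ρ ≤ (r / ρ) * ‖w‖ :=
        mul_le_mul_of_nonneg_left hw (by positivity)
      rwa [div_mul_cancel₀ r hρ.ne'] at this
  have hnrm1 : ‖‖u‖⁻¹ • u‖ = 1 := by
    rw [norm_smul, Real.norm_eq_abs, abs_of_pos (inv_pos.2 hu0), inv_mul_cancel₀ hu0.ne']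
  have hmax : |max ‖u‖ r - max ‖w‖ r| ≤ ‖u - w‖ :=
    (abs_max_sub_max_le_abs _ _ _).trans (abs_norm_sub_norm_le u w)
  have hnd := normalize_diff hu0 hw0
  calc ‖(max ‖u‖ r / ‖u‖) • u - (max ‖w‖ r / ‖w‖) • w‖
      ≤ ‖(max ‖u‖ r - max ‖w‖ r) • (‖u‖⁻¹ • u)‖
        + ‖(max ‖w‖ r) • (‖u‖⁻¹ • u - ‖w‖⁻¹ • w)‖ := by rw [hdec]; exact norm_add_le _ _
    _ = |max ‖u‖ r - max ‖w‖ r| * 1 + (max ‖w‖ r) * ‖‖u‖⁻¹ • u - ‖w‖⁻¹ • w‖ := by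
        rw [norm_smul (max ‖u‖ r - max ‖w‖ r) (‖u‖⁻¹ • u), hnrm1, norm_smul,
          Real.norm_eq_abs, Real.norm_eq_abs, abs_of_nonneg hmw0]
    _ ≤ ‖u - w‖ * 1 + ((r / ρ) * ‖w‖) * (2 * ‖u - w‖ / ‖w‖) := by
        gcongr <;> first | assumption | positivity | nlinarith [norm_nonneg w, hρ.trans_le hρr]
    _ = (1 + 2 * (r / ρ)) * ‖u - w‖ := by field_simp


set_option maxHeartbeats 1000000 in
/-- Upper bound for the measure of an almost minimal set of codimension 1 in a closed ball. -/
theorem codim_one_upper_bound (n : ℕ) (hn : 2 ≤ n) (U : Set (EuclideanSpace ℝ (Fin n)))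
    (h : ℝ → ℝ≥0∞) (Eset : Set (EuclideanSpace ℝ (Fin n)))
    (hU : IsOpen U) (hg : IsGauge h)
    (hE : IsPlainAlmostMinimal (n - 1) U h Eset)
    (x : EuclideanSpace ℝ (Fin n)) (r : ℝ) (hr : 0 < r)
    (hB : closedBall x r ⊆ U) :
    μH[((n - 1 : ℕ) : ℝ)] (Eset ∩ closedBall x r) ≤
      μH[((n - 1 : ℕ) : ℝ)] (sphere (0 : EuclideanSpace ℝ (Fin n)) 1) * ENNReal.ofReal r ^ (n - 1) +
        h r * ENNReal.ofReal r ^ (n - 1) := by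
  let V := EuclideanSpace ℝ (Fin n)
  obtain ⟨hEU, hEclosed, hEfin, hmin⟩ := hE
  -- Step 1: find a point `a` of the small ball not in the closure of `Eset`.
  have hball_subU : ball x (r/4) ⊆ U := fun y hy =>
    hB (mem_closedBall.2 (le_of_lt (lt_of_lt_of_le (mem_ball.1 hy) (by linarith))))
  have hburn : ¬ (ball x (r/4) ⊆ closure Eset) := by
    intro hsub
    have hsub' : ball x (r/4) ⊆ Eset := fun y hy => hEclosed ⟨hsub hy, hball_subU hy⟩
    have h1 : μH[((n-1:ℕ):ℝ)] (Eset ∩ ball x (r/4)) < ⊤ := hEfin x (r/4)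
    rw [inter_eq_self_of_subset_right hsub'] at h1
    have h2 : μH[((n-1:ℕ):ℝ)] (ball x (r/4) : Set V) = ⊤ := by
      have hcast : (((n-1:ℕ):ℝ≥0):ℝ) = ((n-1:ℕ):ℝ) := by norm_cast
      rw [← hcast]
      apply hausdorffMeasure_of_lt_dimH
      rw [Real.dimH_of_mem_nhds (Metric.ball_mem_nhds x (by positivity)),
        finrank_euclideanSpace_fin]
      have : n - 1 < n := by omega
      exact_mod_cast this
    rw [h2] at h1
    exact absurd h1 (lt_irrefl _)
  obtain ⟨a, ha_ball, ha_not⟩ : ∃ a ∈ ball x (r/4), a ∉ closure Eset := by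
    by_contra hcon; push_neg at hcon; exact hburn hcon
  obtain ⟨ρ₀, hρ₀pos, hρ₀⟩ : ∃ ρ₀ > 0, ball a ρ₀ ⊆ (closure Eset)ᶜ :=
    Metric.isOpen_iff.1 (isClosed_closure.isOpen_compl) a ha_not
  set ρ : ℝ := min ρ₀ (r/2) with hρdef
  have hρpos : 0 < ρ := lt_min hρ₀pos (by linarith)
  have hρr2 : ρ ≤ r/2 := min_le_right _ _
  have hρr : ρ ≤ r := by linarith
  have hballE : ∀ y ∈ Eset, ρ ≤ ‖y - a‖ := by
    intro y hy
    by_contra hcon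
    push_neg at hcon
    have : y ∈ ball a ρ₀ := by
      rw [mem_ball, dist_eq_norm]
      exact lt_of_lt_of_le hcon (min_le_left _ _)
    exact (hρ₀ this) (subset_closure hy)
  have hxa : ‖x - a‖ ≤ r/4 := by
    rw [← norm_sub_rev, ← dist_eq_norm]
    exact le_of_lt (mem_ball.1 ha_ball)
  -- Step 2: the deformation
  set lam : V → ℝ := fun y => max 0 (min 1 ((r - ‖y - x‖) * (4/r))) with hlamdef
  set θ : V → V := fun y => y + lam y • (x - a) with hθdef
  set G : V → V := fun y => x + (max ‖θ y - x‖ r / ‖θ y - x‖) • (θ y - x) with hGdef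
  set φ : ℝ → V → V := fun t y => y + t • (G y - y) with hφdef
  have hlam0 : ∀ y, 0 ≤ lam y := fun y => le_max_left _ _
  have hlam1 : ∀ y, lam y ≤ 1 := fun y => max_le zero_le_one (min_le_left _ _)
  -- pairwise Lipschitz bound for lam
  have hlamlip : ∀ y z : V, |lam y - lam z| ≤ (4/r) * ‖y - z‖ := by
    intro y z
    have h1 : |lam y - lam z| ≤ |min 1 ((r - ‖y - x‖) * (4/r)) - min 1 ((r - ‖z - x‖) * (4/r))| := by
      rw [hlamdef]
      simp only [max_comm (0:ℝ)]
      exact abs_max_sub_max_le_abs _ _ _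
    have h2 : |min 1 ((r - ‖y - x‖) * (4/r)) - min 1 ((r - ‖z - x‖) * (4/r))|
        ≤ |(r - ‖y - x‖) * (4/r) - (r - ‖z - x‖) * (4/r)| := by
      refine (abs_min_sub_min_le_max _ _ _ _).trans ?_
      simp
    have h3 : |(r - ‖y - x‖) * (4/r) - (r - ‖z - x‖) * (4/r)|
        = |‖z - x‖ - ‖y - x‖| * (4/r) := by
      rw [← sub_mul, abs_mul, abs_of_pos (by positivity : (0:ℝ) < 4/r)]
      ring_nf
    have h4 : |‖z - x‖ - ‖y - x‖| ≤ ‖y - z‖ := by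
      calc |‖z - x‖ - ‖y - x‖| ≤ ‖(z - x) - (y - x)‖ := abs_norm_sub_norm_le _ _
      _ = ‖y - z‖ := by rw [← norm_sub_rev]; congr 1; abel
    calc |lam y - lam z| ≤ |‖z - x‖ - ‖y - x‖| * (4/r) := h1.trans (h2.trans h3.le)
    _ ≤ ‖y - z‖ * (4/r) := mul_le_mul_of_nonneg_right h4 (by positivity)
    _ = (4/r) * ‖y - z‖ := mul_comm _ _
  have hθlip : ∀ y z : V, ‖θ y - θ z‖ ≤ 2 * ‖y - z‖ := by
    intro y z
    have e : θ y - θ z = (y - z) + (lam y - lam z) • (x - a) := by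
      rw [hθdef]; simp only []; rw [sub_smul]; abel
    calc ‖θ y - θ z‖ ≤ ‖y - z‖ + ‖(lam y - lam z) • (x - a)‖ := by
          rw [e]; exact norm_add_le _ _
    _ = ‖y - z‖ + |lam y - lam z| * ‖x - a‖ := by rw [norm_smul, Real.norm_eq_abs]
    _ ≤ ‖y - z‖ + ((4/r) * ‖y - z‖) * (r/4) :=
        add_le_add le_rfl (mul_le_mul (hlamlip y z) hxa (norm_nonneg _) (by positivity))
    _ = 2 * ‖y - z‖ := by field_simp; ring
  -- lower bound on ‖θ y - x‖ on Eset
  have hθlow : ∀ y ∈ Eset, ρ ≤ ‖θ y - x‖ := by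
    intro y hy
    rcases le_or_gt ‖y - x‖ (3*r/4) with hcase | hcase
    · have hs : (1:ℝ) ≤ (r - ‖y - x‖) * (4/r) := by
        have h14 : r/4 ≤ r - ‖y - x‖ := by linarith
        calc (1:ℝ) = (r/4) * (4/r) := by field_simp
        _ ≤ (r - ‖y - x‖) * (4/r) := mul_le_mul_of_nonneg_right h14 (by positivity)
      have hlam : lam y = 1 := by
        rw [hlamdef]; simp only []
        rw [min_eq_left hs, max_eq_right zero_le_one]
      have : θ y - x = y - a := by
        rw [hθdef]; simp only []; rw [hlam, one_smul]; abel
      rw [this]; exact hballE y hy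
    · have h1 : ‖y - x‖ ≤ ‖θ y - x‖ + ‖lam y • (x - a)‖ := by
        calc ‖y - x‖ = ‖(θ y - x) - lam y • (x - a)‖ := by
              congr 1; rw [hθdef]; simp only []; abel
        _ ≤ ‖θ y - x‖ + ‖lam y • (x - a)‖ := norm_sub_le _ _
      have h2 : ‖lam y • (x - a)‖ ≤ r/4 := by
        rw [norm_smul, Real.norm_eq_abs, abs_of_nonneg (hlam0 y)]
        calc lam y * ‖x - a‖ ≤ 1 * (r/4) := by
              gcongr
              · exact hlam1 y
        _ = r/4 := one_mul _
      linarith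
  -- upper bound on ‖θ y - x‖ on the ball
  have hθhigh : ∀ y : V, ‖y - x‖ ≤ r → ‖θ y - x‖ ≤ r := by
    intro y hy
    have hs0 : 0 ≤ (r - ‖y - x‖) * (4/r) := by
      have : 0 ≤ r - ‖y - x‖ := by linarith
      positivity
    have hlamle : lam y ≤ (r - ‖y - x‖) * (4/r) :=
      max_le hs0 (min_le_right _ _)
    have h1 : ‖θ y - x‖ ≤ ‖y - x‖ + lam y * ‖x - a‖ := by
      calc ‖θ y - x‖ = ‖(y - x) + lam y • (x - a)‖ := by
            congr 1; rw [hθdef]; simp only []; abel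
      _ ≤ ‖y - x‖ + ‖lam y • (x - a)‖ := norm_add_le _ _
      _ = ‖y - x‖ + lam y * ‖x - a‖ := by
            rw [norm_smul, Real.norm_eq_abs, abs_of_nonneg (hlam0 y)]
    have h2 : lam y * ‖x - a‖ ≤ ((r - ‖y - x‖) * (4/r)) * (r/4) :=
      mul_le_mul hlamle hxa (norm_nonneg _) hs0
    have h3 : ((r - ‖y - x‖) * (4/r)) * (r/4) = r - ‖y - x‖ := by field_simp
    linarith
  -- G fixes points outside the closed ball
  have hGout : ∀ y : V, r < ‖y - x‖ → G y = y := by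
    intro y hy
    have hs : (r - ‖y - x‖) * (4/r) ≤ 0 := by
      apply mul_nonpos_of_nonpos_of_nonneg
      · linarith
      · positivity
    have hlam : lam y = 0 := by
      rw [hlamdef]; simp only []
      rw [min_eq_right (hs.trans zero_le_one), max_eq_left hs]
    have hθy : θ y = y := by rw [hθdef]; simp [hlam]
    rw [hGdef]; simp only [hθy]
    rw [max_eq_left (le_of_lt hy), div_self (hr.trans hy).ne', one_smul]
    abel
  -- G maps E ∩ ball into the sphere
  have hGsphere : ∀ y ∈ Eset, ‖y - x‖ ≤ r → G y ∈ sphere x r := by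
    intro y hy hyr
    have hlow := hθlow y hy
    have hhigh := hθhigh y hyr
    have hpos : 0 < ‖θ y - x‖ := lt_of_lt_of_le hρpos hlow
    rw [mem_sphere, dist_eq_norm, hGdef]
    simp only []
    rw [add_sub_cancel_left, max_eq_right hhigh, norm_smul, Real.norm_eq_abs,
      abs_of_pos (by positivity : (0:ℝ) < r / ‖θ y - x‖), div_mul_cancel₀ r hpos.ne']
  -- G is Lipschitz on Eset
  set K : ℝ≥0 := Real.toNNReal (2 * (1 + 2 * (r / ρ))) with hKdef
  have hKcoe : (K : ℝ) = 2 * (1 + 2 * (r / ρ)) := Real.coe_toNNReal _ (by positivity)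
  have hGlip : LipschitzOnWith K G Eset := by
    rw [lipschitzOnWith_iff_dist_le_mul]
    intro y hy z hz
    rw [dist_eq_norm, dist_eq_norm, hKcoe]
    have e : G y - G z = (max ‖θ y - x‖ r / ‖θ y - x‖) • (θ y - x)
        - (max ‖θ z - x‖ r / ‖θ z - x‖) • (θ z - x) := by
      rw [hGdef]; simp only []; abel
    rw [e]
    calc ‖(max ‖θ y - x‖ r / ‖θ y - x‖) • (θ y - x)
          - (max ‖θ z - x‖ r / ‖θ z - x‖) • (θ z - x)‖
        ≤ (1 + 2 * (r / ρ)) * ‖(θ y - x) - (θ z - x)‖ :=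
          normalize_pair hρpos hρr (hθlow y hy) (hθlow z hz)
      _ = (1 + 2 * (r / ρ)) * ‖θ y - θ z‖ := by rw [sub_sub_sub_cancel_right]
      _ ≤ (1 + 2 * (r / ρ)) * (2 * ‖y - z‖) :=
          mul_le_mul_of_nonneg_left (hθlip y z) (by positivity)
      _ = 2 * (1 + 2 * (r / ρ)) * ‖y - z‖ := by ring
  have hGcont : ContinuousOn G Eset := hGlip.continuousOn
  -- the deformation
  have hφ1G : φ 1 = G := by
    funext y; rw [hφdef]; simp
  have hdef : IsDeformationIn Eset (closedBall x r) φ := by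
    refine ⟨?_, ?_, ?_, ?_, ⟨K, by rw [hφ1G]; exact hGlip⟩⟩
    · have hG2 : ContinuousOn (fun p : ℝ × V => G p.2) (Icc (0:ℝ) 1 ×ˢ Eset) :=
        hGcont.comp continuous_snd.continuousOn (fun p hp => hp.2)
      exact continuous_snd.continuousOn.add
        (continuous_fst.continuousOn.smul (hG2.sub continuous_snd.continuousOn))
    · intro y hy; rw [hφdef]; simp
    · intro t ht y hy
      have : G y = y := hGout y (by
        have := hy.2
        rw [mem_closedBall, dist_eq_norm] at this
        push_neg at this
        exact this)
      rw [hφdef]; simp [this]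
    · rintro t ht w ⟨y, ⟨hyE, hyB⟩, rfl⟩
      have hGy : G y ∈ closedBall x r :=
        sphere_subset_closedBall (hGsphere y hyE (by rwa [mem_closedBall, dist_eq_norm] at hyB))
      exact (convex_closedBall x r).add_smul_sub_mem hyB hGy ht
  -- apply almost minimality
  have key := hmin x r φ hr hB hdef
  -- the image is inside the sphere
  have himg : (φ 1 '' Eset) ∩ closedBall x r ⊆ sphere x r := by
    rintro w ⟨⟨y, hyE, rfl⟩, hwB⟩
    rw [hφ1G]
    rcases le_or_gt ‖y - x‖ r with hyr | hyr
    · exact hGsphere y hyE hyr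
    · exfalso
      rw [hφ1G, hGout y hyr, mem_closedBall, dist_eq_norm] at hwB
      exact absurd hwB (not_le.2 hyr)
  -- measure of the sphere
  have hsphere : μH[((n-1:ℕ):ℝ)] (sphere x r : Set V)
      ≤ μH[((n-1:ℕ):ℝ)] (sphere (0:V) 1) * ENNReal.ofReal r ^ (n-1) := by
    have hmap : (sphere x r : Set V) = (fun y : V => x + r • y) '' sphere (0:V) 1 := by
      ext z
      simp only [mem_sphere, mem_image]
      constructor
      · intro hz
        refine ⟨r⁻¹ • (z - x), ?_, ?_⟩
        · rw [dist_zero_right, norm_smul, Real.norm_eq_abs,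
            abs_of_pos (inv_pos.2 hr), ← dist_eq_norm, hz, inv_mul_cancel₀ hr.ne']
        · rw [smul_smul, mul_inv_cancel₀ hr.ne', one_smul]; abel
      · rintro ⟨y, hy, rfl⟩
        rw [dist_zero_right] at hy
        rw [dist_eq_norm, add_sub_cancel_left, norm_smul, Real.norm_eq_abs,
          abs_of_pos hr, hy, mul_one]
    have hlipf : LipschitzWith r.toNNReal (fun y : V => x + r • y) := by
      apply LipschitzWith.of_dist_le_mul
      intro y z
      rw [dist_add_left, dist_smul₀, Real.norm_eq_abs, abs_of_pos hr,
        Real.coe_toNNReal r hr.le]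
    have hle := hlipf.hausdorffMeasure_image_le
      (by positivity : (0:ℝ) ≤ ((n-1:ℕ):ℝ)) (sphere (0:V) 1)
    rw [hmap]
    refine hle.trans (le_of_eq ?_)
    rw [mul_comm]
    congr 1
    rw [← ENNReal.rpow_natCast (ENNReal.ofReal r) (n-1)]
    rfl
  -- conclude
  calc μH[((n-1:ℕ):ℝ)] (Eset ∩ closedBall x r)
      ≤ μH[((n-1:ℕ):ℝ)] ((φ 1 '' Eset) ∩ closedBall x r)
        + h r * ENNReal.ofReal r ^ (n-1) := key
    _ ≤ μH[((n-1:ℕ):ℝ)] (sphere x r : Set V) + h r * ENNReal.ofReal r ^ (n-1) := by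
        gcongr
    _ ≤ μH[((n-1:ℕ):ℝ)] (sphere (0:V) 1) * ENNReal.ofReal r ^ (n-1)
        + h r * ENNReal.ofReal r ^ (n-1) := by
        gcongr

end
end

section
/- Let 0 ≤ d < k ≤ n be integers. There is a constant C = C(n,k,d) such that the following holds. Let Q be a k-dimensional cube contained in a k-dimensional affine subspace H of ℝⁿ, and let F ⊆ Q be a closed set with H^d(F) < ∞. Then there exists a point ξ ∈ ½Q \ F such that H^d(π_ξ(F)) ≤ C H^d(F), where π_ξ is the radial projection centered at ξ. -/
open Set Metric MeasureTheory Filter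
open scoped ENNReal NNReal RealInnerProductSpace

attribute [local instance] Classical.propDecidable

noncomputable section

variable {n : ℕ}

namespace FFAux



variable {V : Type*} [NormedAddCommGroup V] [NormedSpace ℝ V] {D : Set V} {r R : ℝ}

lemma gauge_le_norm_div (hr : 0 < r) (hb : ball 0 r ⊆ D) (u : V) :
    gauge D u ≤ ‖u‖ / r := by
  calc gauge D u ≤ gauge (ball 0 r) u := gauge_mono (absorbent_ball_zero hr) hb u
  _ = ‖u‖ / r := gauge_ball hr.le u

lemma norm_div_le_gauge (hr : 0 < r) (hb : ball 0 r ⊆ D) (hR : 0 < R)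
    (hD : D ⊆ closedBall 0 R) (u : V) : ‖u‖ / R ≤ gauge D u := by
  have habs : Absorbent ℝ D := (absorbent_ball_zero hr).mono hb
  calc ‖u‖ / R = gauge (closedBall 0 R) u := (gauge_closedBall hR.le u).symm
  _ ≤ gauge D u := gauge_mono habs hD u

lemma abs_gauge_sub (hc : Convex ℝ D) (hr : 0 < r) (hb : ball 0 r ⊆ D) (u v : V) :
    |gauge D u - gauge D v| ≤ ‖u - v‖ / r := by
  have habs : Absorbent ℝ D := (absorbent_ball_zero hr).mono hb
  have h1 : ∀ x y : V, gauge D x - gauge D y ≤ ‖x - y‖ / r := by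
    intro x y
    have := gauge_add_le hc habs y (x - y)
    simp only [add_sub_cancel] at this
    have h2 := gauge_le_norm_div hr hb (x - y)
    linarith
  rw [abs_sub_le_iff]
  exact ⟨h1 u v, by simpa [norm_sub_rev] using h1 v u⟩

lemma radial_lipschitz (hc : Convex ℝ D) (hr : 0 < r) (hb : ball 0 r ⊆ D) (hR : 0 < R)
    (hD : D ⊆ closedBall 0 R) {ρ : ℝ} (hρ : 0 < ρ) :
    LipschitzOnWith (R / ρ + R ^ 2 / (r * ρ)).toNNReal
      (fun u => (gauge D u)⁻¹ • u) {u : V | ρ ≤ ‖u‖} := by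
  have hL0 : (0:ℝ) ≤ R / ρ + R ^ 2 / (r * ρ) := by positivity
  apply LipschitzOnWith.of_dist_le_mul
  intro u hu v hv
  simp only [mem_setOf_eq] at hu hv
  rw [Real.coe_toNNReal _ hL0, dist_eq_norm, dist_eq_norm]
  set a := gauge D u with ha
  set b := gauge D v with hb'
  have hun : 0 < ‖u‖ := lt_of_lt_of_le hρ hu
  have hvn : 0 < ‖v‖ := lt_of_lt_of_le hρ hv
  have hau : ‖u‖ / R ≤ a := norm_div_le_gauge hr hb hR hD u
  have hbv : ‖v‖ / R ≤ b := norm_div_le_gauge hr hb hR hD v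
  have ha0 : 0 < a := lt_of_lt_of_le (by positivity) hau
  have hb0 : 0 < b := lt_of_lt_of_le (by positivity) hbv
  have hainv : a⁻¹ ≤ R / ‖u‖ := by
    rw [← inv_div ‖u‖ R]
    exact inv_anti₀ (by positivity) hau
  have hbinv : b⁻¹ ≤ R / ‖v‖ := by
    rw [← inv_div ‖v‖ R]
    exact inv_anti₀ (by positivity) hbv
  have hg : |a - b| ≤ ‖u - v‖ / r := abs_gauge_sub hc hr hb u v
  have key : a⁻¹ • u - b⁻¹ • v = a⁻¹ • (u - v) + (a⁻¹ - b⁻¹) • v := by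
    rw [smul_sub, sub_smul]; abel
  calc ‖a⁻¹ • u - b⁻¹ • v‖ = ‖a⁻¹ • (u - v) + (a⁻¹ - b⁻¹) • v‖ := by rw [key]
  _ ≤ ‖a⁻¹ • (u - v)‖ + ‖(a⁻¹ - b⁻¹) • v‖ := norm_add_le _ _
  _ = a⁻¹ * ‖u - v‖ + |a⁻¹ - b⁻¹| * ‖v‖ := by
      rw [norm_smul, norm_smul, Real.norm_eq_abs, Real.norm_eq_abs, abs_of_pos (by positivity)]
  _ ≤ (R / ρ) * ‖u - v‖ + (R ^ 2 / (r * ρ)) * ‖u - v‖ := by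
      gcongr ?_ + ?_
      · have : a⁻¹ ≤ R / ρ := hainv.trans (by gcongr)
        gcongr
      · have hab0 : 0 < a * b := mul_pos ha0 hb0
        have habinv : |a⁻¹ - b⁻¹| = |b - a| / (a * b) := by
          rw [inv_sub_inv ha0.ne' hb0.ne', abs_div, abs_of_pos hab0]
        rw [habinv, abs_sub_comm]
        have h1 : |a - b| / (a * b) * ‖v‖ ≤ (‖u - v‖ / r) / (a * b) * ‖v‖ := by gcongr
        refine h1.trans ?_
        have hab : ‖u‖ / R * (‖v‖ / R) ≤ a * b := by gcongr
        have hd0 : (0:ℝ) < ‖u‖ / R * (‖v‖ / R) := by positivity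
        have h2 : (‖u - v‖ / r) / (a * b) * ‖v‖ ≤ (‖u - v‖ / r) / (‖u‖ / R * (‖v‖ / R)) * ‖v‖ := by
          gcongr
        refine h2.trans ?_
        have heq : (‖u - v‖ / r) / (‖u‖ / R * (‖v‖ / R)) * ‖v‖ = ‖u - v‖ * R ^ 2 / (r * ‖u‖) := by
          field_simp
        have heq2 : R ^ 2 / (r * ρ) * ‖u - v‖ = ‖u - v‖ * R ^ 2 / (r * ρ) := by ring
        rw [heq, heq2]
        gcongr
  _ = (R / ρ + R ^ 2 / (r * ρ)) * ‖u - v‖ := by ring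



variable {k : ℕ} {s : ℝ}

lemma abs_coord_le_norm (u : EuclideanSpace ℝ (Fin k)) (i : Fin k) : |u i| ≤ ‖u‖ := by
  rw [EuclideanSpace.norm_eq]
  calc |u i| = Real.sqrt (‖u i‖ ^ 2) := by
        rw [Real.norm_eq_abs, Real.sqrt_sq_eq_abs, abs_abs]
  _ ≤ Real.sqrt (∑ j, ‖u j‖ ^ 2) := by
        apply Real.sqrt_le_sqrt
        exact Finset.single_le_sum (f := fun j => ‖u j‖ ^ 2) (fun j _ => by positivity) (Finset.mem_univ i)

lemma norm_le_sqrt_mul {u : EuclideanSpace ℝ (Fin k)} {a : ℝ} (ha : 0 ≤ a)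
    (h : ∀ i, |u i| ≤ a) : ‖u‖ ≤ Real.sqrt k * a := by
  rw [EuclideanSpace.norm_eq]
  have h1 : ∑ j, ‖u j‖ ^ 2 ≤ ∑ _j : Fin k, a ^ 2 := by
    apply Finset.sum_le_sum
    intro j _
    rw [Real.norm_eq_abs]
    exact pow_le_pow_left₀ (abs_nonneg _) (h j) 2
  calc Real.sqrt (∑ j, ‖u j‖ ^ 2) ≤ Real.sqrt (∑ _j : Fin k, a ^ 2) := Real.sqrt_le_sqrt h1
  _ = Real.sqrt (k * a ^ 2) := by
        rw [Finset.sum_const, Finset.card_univ, Fintype.card_fin, nsmul_eq_mul]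
  _ = Real.sqrt k * a := by
        rw [Real.sqrt_mul (by positivity), Real.sqrt_sq ha]

lemma convex_unitCube : Convex ℝ (unitCube k s) := by
  intro y hy z hz α β hα hβ hαβ
  intro i
  have h := (convex_Icc (0:ℝ) s) (hy i) (hz i) hα hβ hαβ
  simpa [PiLp.add_apply, PiLp.smul_apply, smul_eq_mul] using h

lemma isClosed_unitCube : IsClosed (unitCube k s) := by
  have : unitCube k s = ⋂ i, (⇑(EuclideanSpace.proj i : EuclideanSpace ℝ (Fin k) →L[ℝ] ℝ)) ⁻¹' Icc (0:ℝ) s := by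
    ext y; simp [unitCube, EuclideanSpace.proj]
  rw [this]
  exact isClosed_iInter fun i => isClosed_Icc.preimage (EuclideanSpace.proj i).continuous

lemma isClosed_halfCube : IsClosed (halfCube k s) := by
  have : halfCube k s = ⋂ i, (⇑(EuclideanSpace.proj i : EuclideanSpace ℝ (Fin k) →L[ℝ] ℝ)) ⁻¹' Icc (s/4) (3*s/4) := by
    ext y; simp [halfCube, EuclideanSpace.proj]
  rw [this]
  exact isClosed_iInter fun i => isClosed_Icc.preimage (EuclideanSpace.proj i).continuous

lemma halfCube_subset (hs : 0 < s) : halfCube k s ⊆ unitCube k s := by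
  intro y hy i
  have := hy i
  constructor <;> [linarith [this.1]; linarith [this.2]]

lemma norm_sub_le_of_mem_unitCube (hs : 0 < s) {y z : EuclideanSpace ℝ (Fin k)}
    (hy : y ∈ unitCube k s) (hz : z ∈ unitCube k s) : ‖y - z‖ ≤ Real.sqrt k * s := by
  apply norm_le_sqrt_mul hs.le
  intro i
  have h1 := hy i; have h2 := hz i
  have : (y - z) i = y i - z i := by simp [PiLp.sub_apply]
  rw [this, abs_le]
  constructor <;> [linarith [h1.1, h2.2]; linarith [h1.2, h2.1]]

/-- The translated cube. -/
def cubeAt (k : ℕ) (s : ℝ) (ξ : EuclideanSpace ℝ (Fin k)) : Set (EuclideanSpace ℝ (Fin k)) :=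
  (fun u => ξ + u) ⁻¹' unitCube k s

lemma ball_subset_cubeAt {ξ : EuclideanSpace ℝ (Fin k)} (hξ : ξ ∈ halfCube k s) :
    ball 0 (s/4) ⊆ cubeAt k s ξ := by
  intro u hu
  show ξ + u ∈ unitCube k s
  intro i
  have hui : |u i| ≤ ‖u‖ := abs_coord_le_norm u i
  rw [mem_ball_zero_iff] at hu
  have hξi := hξ i
  have : (ξ + u) i = ξ i + u i := by simp [PiLp.add_apply]
  rw [mem_Icc] at hξi ⊢
  rw [this]
  rw [abs_le] at hui
  constructor <;> [linarith [hξi.1]; linarith [hξi.2]]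

lemma cubeAt_subset_closedBall (hs : 0 < s) {ξ : EuclideanSpace ℝ (Fin k)}
    (hξ : ξ ∈ halfCube k s) : cubeAt k s ξ ⊆ closedBall 0 (Real.sqrt k * s) := by
  intro u hu
  rw [mem_closedBall_zero_iff]
  have h1 : ξ + u ∈ unitCube k s := hu
  have h2 : ξ ∈ unitCube k s := halfCube_subset hs hξ
  have := norm_sub_le_of_mem_unitCube hs h1 h2
  simpa using this

lemma convex_cubeAt (ξ : EuclideanSpace ℝ (Fin k)) : Convex ℝ (cubeAt k s ξ) :=
  convex_unitCube.translate_preimage_right ξ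

lemma mem_frontier_cubeAt {ξ z : EuclideanSpace ℝ (Fin k)}
    (hz : z ∈ frontier (unitCube k s)) : z - ξ ∈ frontier (cubeAt k s ξ) := by
  have h : cubeAt k s ξ = (Homeomorph.addLeft ξ) ⁻¹' unitCube k s := rfl
  rw [h, ← Homeomorph.preimage_frontier]
  simp only [mem_preimage, Homeomorph.coe_addLeft]
  simpa using hz


section Annuli

variable {k d : ℕ} {s : ℝ}

/-- Dyadic annulus around `ξ`. -/
def ann (k : ℕ) (R : ℝ) (ξ : EuclideanSpace ℝ (Fin k)) (j : ℕ) : Set (EuclideanSpace ℝ (Fin k)) :=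
  {y | R * (2⁻¹:ℝ) ^ (j+1) < ‖y - ξ‖ ∧ ‖y - ξ‖ ≤ R * (2⁻¹:ℝ) ^ j}

lemma measurableSet_ann {R : ℝ} {ξ : EuclideanSpace ℝ (Fin k)} {j : ℕ} :
    MeasurableSet (ann k R ξ j) := by
  have h : Continuous fun y : EuclideanSpace ℝ (Fin k) => ‖y - ξ‖ :=
    (continuous_id.sub continuous_const).norm
  exact (measurableSet_lt measurable_const h.measurable).inter
    (measurableSet_le h.measurable measurable_const)

lemma mem_ann_iff {R : ℝ} {ξ y : EuclideanSpace ℝ (Fin k)} {j : ℕ} :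
    y ∈ ann k R ξ j ↔ R * (2⁻¹:ℝ) ^ (j+1) < ‖y - ξ‖ ∧ ‖y - ξ‖ ≤ R * (2⁻¹:ℝ) ^ j := Iff.rfl

lemma exists_ann {R c : ℝ} (hR : 0 < R) (hc0 : 0 < c) (hcR : c ≤ R) :
    ∃ j : ℕ, R * (2⁻¹:ℝ) ^ (j+1) < c ∧ c ≤ R * (2⁻¹:ℝ) ^ j := by
  have hex : ∃ j : ℕ, R * (2⁻¹:ℝ) ^ (j+1) < c := by
    obtain ⟨m, hm⟩ := exists_pow_lt_of_lt_one (show (0:ℝ) < c / R by positivity)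
      (show (2⁻¹:ℝ) < 1 by norm_num)
    refine ⟨m, ?_⟩
    have h1 : R * (2⁻¹:ℝ) ^ (m+1) ≤ R * (2⁻¹:ℝ) ^ m := by
      have hp : (2⁻¹:ℝ) ^ (m+1) ≤ (2⁻¹:ℝ) ^ m :=
        pow_le_pow_of_le_one (by norm_num) (by norm_num) (by omega)
      nlinarith
    have h2 : R * (2⁻¹:ℝ) ^ m < c := by
      rw [lt_div_iff₀ hR] at hm
      linarith [hm]
    linarith
  classical
  let j := Nat.find hex
  refine ⟨j, Nat.find_spec hex, ?_⟩
  rcases Nat.eq_zero_or_pos j with hj | hj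
  · rw [hj]; simpa using hcR
  · have := Nat.find_min hex (m := j - 1) (by omega)
    push_neg at this
    have hj1 : j - 1 + 1 = j := by omega
    rwa [hj1] at this

lemma volume_zero_of_hausdorff_lt (hdk : d < k) {F : Set (EuclideanSpace ℝ (Fin k))}
    (hFmeas : MeasurableSet F) (hFm : μH[(d:ℝ)] F ≠ ⊤) :
    volume F = 0 := by
  have hk0 : μH[(k:ℝ)] F = 0 := by
    rcases MeasureTheory.Measure.hausdorffMeasure_zero_or_top (show (d:ℝ) < (k:ℝ) by exact_mod_cast hdk) F with h | h
    · exact h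
    · exact absurd h hFm
  set e := (MeasurableEquiv.toLp 2 (Fin k → ℝ)).symm with he
  have h1 : volume F = volume (⇑e '' F) := by
    have := (EuclideanSpace.volume_preserving_symm_measurableEquiv_toLp (Fin k)).measure_preimage
      (e.measurableSet_image.2 hFmeas).nullMeasurableSet
    rw [← this]
    congr 1
    exact (Set.preimage_image_eq F e.injective).symm
  rw [h1]
  have h2 : volume (⇑e '' F) = μH[(Fintype.card (Fin k) : ℝ)] (⇑e '' F) := by
    rw [hausdorffMeasure_pi_real]
  rw [h2]
  have h3 : LipschitzWith 1 ⇑e := by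
    exact PiLp.lipschitzWith_ofLp 2 _
  have h4 := h3.hausdorffMeasure_image_le
    (show (0:ℝ) ≤ (Fintype.card (Fin k) : ℝ) by positivity) F
  refine le_antisymm ?_ zero_le
  refine h4.trans ?_
  rw [Fintype.card_fin]
  rw [hk0, mul_zero]

end Annuli

section Selection

variable {k d : ℕ} {s : ℝ}

lemma exists_good_center (hdk : d < k) (hs : 0 < s) {F : Set (EuclideanSpace ℝ (Fin k))}
    (hFmeas : MeasurableSet F) (hFQ : F ⊆ unitCube k s) (hFm : μH[(d:ℝ)] F < ⊤) :
    ∃ ξ ∈ halfCube k s, ξ ∉ F ∧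
      ∑' j : ℕ, (2:ℝ≥0∞)^(j*d) * μH[(d:ℝ)] (F ∩ ann k (Real.sqrt k * s) ξ j)
        ≤ ENNReal.ofReal (4^(k+1) * Real.sqrt k ^ k) * μH[(d:ℝ)] F := by
  classical
  have hk0 : 0 < k := lt_of_le_of_lt (Nat.zero_le d) hdk
  have hsq : 0 < Real.sqrt k := Real.sqrt_pos.2 (by exact_mod_cast hk0)
  set R : ℝ := Real.sqrt k * s with hRdef
  have hR0 : 0 < R := by positivity
  set ξ₀ : EuclideanSpace ℝ (Fin k) := WithLp.toLp 2 (fun _ => s/2) with hξ₀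
  have hξ₀app : ∀ i, ξ₀ i = s/2 := fun i => rfl
  haveI : Nontrivial (EuclideanSpace ℝ (Fin k)) := by
    refine ⟨ξ₀, 0, fun h => ?_⟩
    have h1 : ξ₀ ⟨0, hk0⟩ = (0 : EuclideanSpace ℝ (Fin k)) ⟨0, hk0⟩ := congrArg (fun x => x ⟨0, hk0⟩) h
    have h2 : s / 2 = (0:ℝ) := h1
    linarith
  set ν : Measure (EuclideanSpace ℝ (Fin k)) := μH[(d:ℝ)].restrict F with hν
  haveI : IsFiniteMeasure ν := ⟨by rw [hν, Measure.restrict_apply_univ]; exact hFm⟩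
  set m : Measure (EuclideanSpace ℝ (Fin k)) := volume.restrict (halfCube k s) with hm
  set v : ℝ≥0∞ := volume (ball (0 : EuclideanSpace ℝ (Fin k)) 1) with hv
  have hv0 : v ≠ 0 := (measure_ball_pos _ _ one_pos).ne'
  have hvt : v ≠ ⊤ := measure_ball_lt_top.ne
  have hνann : ∀ (ξ : EuclideanSpace ℝ (Fin k)) (j : ℕ),
      ν (ann k R ξ j) = μH[(d:ℝ)] (F ∩ ann k R ξ j) := by
    intro ξ j
    rw [hν, Measure.restrict_apply measurableSet_ann, inter_comm]
  have hhalfmeas : MeasurableSet (halfCube k s) := isClosed_halfCube.measurableSet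
  have hball : ball ξ₀ (s/4) ⊆ halfCube k s := by
    intro u hu
    rw [mem_ball] at hu
    intro i
    have h1 : |(u - ξ₀) i| ≤ ‖u - ξ₀‖ := abs_coord_le_norm _ i
    have h2 : (u - ξ₀) i = u i - s/2 := by simp [PiLp.sub_apply, hξ₀app]
    rw [dist_eq_norm] at hu
    rw [h2, abs_le] at h1
    constructor <;> [linarith [h1.1]; linarith [h1.2]]
  have hvol_half : ENNReal.ofReal ((s/4)^k) * v ≤ volume (halfCube k s) := by
    have hb := measure_mono (μ := volume) hball
    rwa [Measure.addHaar_ball volume ξ₀ (by linarith : (0:ℝ) ≤ s/4),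
      finrank_euclideanSpace_fin] at hb
  have hvolF : volume F = 0 := volume_zero_of_hausdorff_lt hdk hFmeas hFm.ne
  have hhalfpos : 0 < volume (halfCube k s) := by
    refine lt_of_lt_of_le ?_ hvol_half
    exact ENNReal.mul_pos (ENNReal.ofReal_pos.2 (pow_pos (by linarith) k)).ne' hv0
  have hξex : ∃ ξ ∈ halfCube k s, ξ ∉ F := by
    have h1 : volume (halfCube k s) ≤ volume (halfCube k s \ F) + volume F :=
      (measure_mono (subset_diff_union _ _)).trans (measure_union_le _ _)
    rw [hvolF, add_zero] at h1
    have h2 : volume (halfCube k s \ F) ≠ 0 := (lt_of_lt_of_le hhalfpos h1).ne'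
    obtain ⟨ξ, hξ⟩ := nonempty_of_measure_ne_zero h2
    exact ⟨ξ, hξ.1, hξ.2⟩
  rcases eq_or_ne (μH[(d:ℝ)] F) 0 with hzero | hzero
  · obtain ⟨ξ, hξ1, hξ2⟩ := hξex
    refine ⟨ξ, hξ1, hξ2, ?_⟩
    have hz : ∀ j : ℕ, μH[(d:ℝ)] (F ∩ ann k R ξ j) = 0 := fun j =>
      le_antisymm ((measure_mono inter_subset_left).trans hzero.le) zero_le
    simp [hz]
  -- now the averaging argument
  set S : ℕ → Set (EuclideanSpace ℝ (Fin k) × EuclideanSpace ℝ (Fin k)) :=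
    fun j => {p | R * (2⁻¹:ℝ)^(j+1) < ‖p.2 - p.1‖ ∧ ‖p.2 - p.1‖ ≤ R * (2⁻¹:ℝ)^j} with hS
  have hSmeas : ∀ j : ℕ, MeasurableSet (S j) := by
    intro j
    have h : Continuous fun p : EuclideanSpace ℝ (Fin k) × EuclideanSpace ℝ (Fin k) =>
      ‖p.2 - p.1‖ := (continuous_snd.sub continuous_fst).norm
    exact (measurableSet_lt measurable_const h.measurable).inter
      (measurableSet_le h.measurable measurable_const)
  have hterm : ∀ j : ℕ, Measurable fun ξ => ν (ann k R ξ j) := by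
    intro j
    exact measurable_measure_prodMk_left (hSmeas j)
  set G : EuclideanSpace ℝ (Fin k) → ℝ≥0∞ :=
    fun ξ => ∑' j : ℕ, (2:ℝ≥0∞)^(j*d) * ν (ann k R ξ j) with hG
  have hGmeas : Measurable G := Measurable.ennreal_tsum fun j => (hterm j).const_mul _
  -- the integral bound for each annulus
  have hint : ∀ j : ℕ, ∫⁻ ξ, ν (ann k R ξ j) ∂m
      ≤ (ENNReal.ofReal ((R * (2⁻¹:ℝ)^j)^k) * v) * ν univ := by
    intro j
    have hswap : ∫⁻ ξ, ν (ann k R ξ j) ∂m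
        = ∫⁻ y, m ((fun ξ => (ξ, y)) ⁻¹' S j) ∂ν := by
      have h1 : ∫⁻ ξ, ν (ann k R ξ j) ∂m = m.prod ν (S j) :=
        (Measure.prod_apply (hSmeas j)).symm
      rw [h1]
      exact Measure.prod_apply_symm (hSmeas j)
    rw [hswap]
    have hin : ∀ y : EuclideanSpace ℝ (Fin k),
        m ((fun ξ => (ξ, y)) ⁻¹' S j) ≤ ENNReal.ofReal ((R * (2⁻¹:ℝ)^j)^k) * v := by
      intro y
      have hsub2 : ((fun ξ => (ξ, y)) ⁻¹' S j)
          ⊆ closedBall y (R * (2⁻¹:ℝ)^j) := by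
        intro ξ hξ
        rw [mem_closedBall, dist_eq_norm, ← norm_sub_rev]
        exact hξ.2
      calc m ((fun ξ => (ξ, y)) ⁻¹' S j)
          = volume (((fun ξ : EuclideanSpace ℝ (Fin k) => (ξ, y)) ⁻¹' S j) ∩ halfCube k s) := by
            rw [hm, Measure.restrict_apply' hhalfmeas]
      _ ≤ volume (closedBall y (R * (2⁻¹:ℝ)^j)) :=
            measure_mono (inter_subset_left.trans hsub2)
      _ = ENNReal.ofReal ((R * (2⁻¹:ℝ)^j)^k) * v := by
            rw [Measure.addHaar_closedBall volume y
              (mul_pos hR0 (pow_pos (by norm_num) j)).le, finrank_euclideanSpace_fin]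
    calc ∫⁻ y, m ((fun ξ => (ξ, y)) ⁻¹' S j) ∂ν
        ≤ ∫⁻ _y, ENNReal.ofReal ((R * (2⁻¹:ℝ)^j)^k) * v ∂ν := lintegral_mono hin
    _ = (ENNReal.ofReal ((R * (2⁻¹:ℝ)^j)^k) * v) * ν univ := lintegral_const _
  -- total integral bound
  have htermbd : ∀ j : ℕ, (2:ℝ≥0∞)^(j*d) * ((ENNReal.ofReal ((R * (2⁻¹:ℝ)^j)^k) * v) * ν univ)
      ≤ (ENNReal.ofReal (R^k) * v * ν univ) * (2⁻¹:ℝ≥0∞)^j := by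
    intro j
    have h1 : ENNReal.ofReal ((R * (2⁻¹:ℝ)^j)^k)
        = ENNReal.ofReal (R^k) * (2⁻¹:ℝ≥0∞)^(j*k) := by
      rw [mul_pow, ← pow_mul, ENNReal.ofReal_mul (pow_nonneg hR0.le k)]
      congr 1
      rw [ENNReal.ofReal_pow (by norm_num), ENNReal.ofReal_inv_of_pos (by norm_num),
        ENNReal.ofReal_ofNat]
    rw [h1]
    have hjk : j*k = j*d + j*(k-d) := by
      conv_lhs => rw [show k = d + (k - d) by omega]
      rw [Nat.mul_add]
    have h2 : (2:ℝ≥0∞)^(j*d) * (2⁻¹:ℝ≥0∞)^(j*k) = (2⁻¹:ℝ≥0∞)^(j*(k-d)) := by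
      rw [hjk, pow_add, ← mul_assoc]
      rw [← ENNReal.inv_pow, ENNReal.mul_inv_cancel (by norm_num) (by norm_num), one_mul]
    have h3 : ((2:ℝ≥0∞)⁻¹)^(j*(k-d)) ≤ (2⁻¹:ℝ≥0∞)^j :=
      pow_le_pow_of_le_one zero_le (by norm_num)
        (Nat.le_mul_of_pos_right j (by omega))
    calc (2:ℝ≥0∞)^(j*d) * ((ENNReal.ofReal (R^k) * (2⁻¹:ℝ≥0∞)^(j*k) * v) * ν univ)
        = (ENNReal.ofReal (R^k) * v * ν univ) * ((2:ℝ≥0∞)^(j*d) * (2⁻¹:ℝ≥0∞)^(j*k)) := by ring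
    _ = (ENNReal.ofReal (R^k) * v * ν univ) * ((2⁻¹:ℝ≥0∞))^(j*(k-d)) := by rw [h2]
    _ ≤ (ENNReal.ofReal (R^k) * v * ν univ) * (2⁻¹:ℝ≥0∞)^j := mul_le_mul_right h3 _
  have hI : ∫⁻ ξ, G ξ ∂m ≤ (ENNReal.ofReal (R^k) * v * ν univ) * 2 := by
    rw [hG]
    rw [lintegral_tsum (fun j => ((hterm j).const_mul _).aemeasurable)]
    calc ∑' j : ℕ, ∫⁻ ξ, (2:ℝ≥0∞)^(j*d) * ν (ann k R ξ j) ∂m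
        ≤ ∑' j : ℕ, (ENNReal.ofReal (R^k) * v * ν univ) * (2⁻¹:ℝ≥0∞)^j := by
          apply ENNReal.tsum_le_tsum
          intro j
          rw [lintegral_const_mul _ (hterm j)]
          exact le_trans (mul_le_mul_right (hint j) _) (htermbd j)
    _ = (ENNReal.ofReal (R^k) * v * ν univ) * ∑' j : ℕ, (2⁻¹:ℝ≥0∞)^j :=
          ENNReal.tsum_mul_left
    _ = (ENNReal.ofReal (R^k) * v * ν univ) * 2 := by
          rw [ENNReal.tsum_geometric, ENNReal.one_sub_inv_two]
          simp
  -- Markov and conclusion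
  set M : ℝ≥0∞ := ENNReal.ofReal (4^(k+1) * Real.sqrt k ^ k) * μH[(d:ℝ)] F with hM
  have hνuniv : ν univ = μH[(d:ℝ)] F := by rw [hν, Measure.restrict_apply_univ]
  suffices hsuf : ∃ ξ ∈ halfCube k s, ξ ∉ F ∧ G ξ ≤ M by
    obtain ⟨ξ, h1, h2, h3⟩ := hsuf
    refine ⟨ξ, h1, h2, ?_⟩
    have heq : G ξ = ∑' j : ℕ, (2:ℝ≥0∞)^(j*d) * μH[(d:ℝ)] (F ∩ ann k R ξ j) :=
      tsum_congr fun j => by rw [hνann]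
    rw [← heq]
    exact h3
  by_contra hcon
  push_neg at hcon
  have hsub : halfCube k s ⊆ F ∪ {ξ | M ≤ G ξ} := by
    intro ξ hξ
    by_cases hf : ξ ∈ F
    · exact Or.inl hf
    · exact Or.inr (hcon ξ hξ hf).le
  have hmF : m F = 0 := by
    rw [hm, Measure.restrict_apply' hhalfmeas]
    exact le_antisymm ((measure_mono inter_subset_left).trans hvolF.le) zero_le
  have hmark : M * m {ξ | M ≤ G ξ} ≤ ∫⁻ ξ, G ξ ∂m :=
    mul_meas_ge_le_lintegral₀ hGmeas.aemeasurable M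
  have hBadm : volume (halfCube k s) ≤ m {ξ | M ≤ G ξ} := by
    have h1 : volume (halfCube k s) = m (F ∪ {ξ | M ≤ G ξ}) := by
      rw [hm, Measure.restrict_apply' hhalfmeas, Set.inter_eq_right.2 hsub]
    have h2 := measure_union_le (μ := m) F {ξ | M ≤ G ξ}
    rw [← h1] at h2
    rwa [hmF, zero_add] at h2
  have hchain : M * volume (halfCube k s) ≤ (ENNReal.ofReal (R^k) * v * ν univ) * 2 :=
    le_trans (mul_le_mul_right hBadm M) (le_trans hmark hI)
  have hlow : (ENNReal.ofReal (R^k) * v * ν univ) * 4 ≤ M * volume (halfCube k s) := by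
    have hkey : M * (ENNReal.ofReal ((s/4)^k) * v)
        = (ENNReal.ofReal (R^k) * v * ν univ) * 4 := by
      rw [hM, hνuniv]
      have hr1 : ENNReal.ofReal (4^(k+1) * Real.sqrt k ^ k) * ENNReal.ofReal ((s/4)^k)
          = ENNReal.ofReal (R^k) * 4 := by
        rw [← ENNReal.ofReal_mul (by positivity)]
        have : (4:ℝ)^(k+1) * Real.sqrt k ^ k * (s/4)^k = R^k * 4 := by
          rw [hRdef, mul_pow, div_pow, pow_succ]
          field_simp
        rw [this, ENNReal.ofReal_mul (pow_nonneg hR0.le k), ENNReal.ofReal_ofNat]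
      calc ENNReal.ofReal (4^(k+1) * Real.sqrt k ^ k) * μH[(d:ℝ)] F
            * (ENNReal.ofReal ((s/4)^k) * v)
          = (ENNReal.ofReal (4^(k+1) * Real.sqrt k ^ k) * ENNReal.ofReal ((s/4)^k))
            * (v * μH[(d:ℝ)] F) := by ring
      _ = (ENNReal.ofReal (R^k) * 4) * (v * μH[(d:ℝ)] F) := by rw [hr1]
      _ = ENNReal.ofReal (R^k) * v * μH[(d:ℝ)] F * 4 := by ring
    rw [← hkey]
    exact mul_le_mul_right hvol_half M
  have hfinal : (ENNReal.ofReal (R^k) * v * ν univ) * 4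
      ≤ (ENNReal.ofReal (R^k) * v * ν univ) * 2 := le_trans hlow hchain
  set X : ℝ≥0∞ := ENNReal.ofReal (R^k) * v * ν univ with hX
  have hX0 : X ≠ 0 := by
    rw [hX, hνuniv]
    apply mul_ne_zero (mul_ne_zero _ hv0) hzero
    simpa using (pow_pos hR0 k)
  have hXt : X ≠ ⊤ := by
    rw [hX, hνuniv]
    exact ENNReal.mul_ne_top (ENNReal.mul_ne_top ENNReal.ofReal_ne_top hvt) hFm.ne
  rw [mul_comm X 4, mul_comm X 2, ENNReal.mul_le_mul_iff_left hX0 hXt] at hfinal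
  norm_num at hfinal

end Selection

section ImageBound

variable {k d : ℕ} {s : ℝ}

lemma image_bound (hdk : d < k) (hs : 0 < s) {F : Set (EuclideanSpace ℝ (Fin k))}
    (hFQ : F ⊆ unitCube k s) {ξ : EuclideanSpace ℝ (Fin k)}
    (hξh : ξ ∈ halfCube k s) (hξF : ξ ∉ F) :
    μH[(d:ℝ)] ((fun y => ξ + (gauge (cubeAt k s ξ) (y - ξ))⁻¹ • (y - ξ)) '' F)
      ≤ ENNReal.ofReal ((2*(1+4*Real.sqrt k))^d)
        * ∑' j : ℕ, (2:ℝ≥0∞)^(j*d) * μH[(d:ℝ)] (F ∩ ann k (Real.sqrt k * s) ξ j) := by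
  classical
  have hk0 : 0 < k := lt_of_le_of_lt (Nat.zero_le d) hdk
  have hsq : 0 < Real.sqrt k := Real.sqrt_pos.2 (by exact_mod_cast hk0)
  set R : ℝ := Real.sqrt k * s with hRdef
  have hR0 : 0 < R := mul_pos hsq hs
  have hd0 : (0:ℝ) ≤ (d:ℝ) := by positivity
  set D : Set (EuclideanSpace ℝ (Fin k)) := cubeAt k s ξ with hD
  set g : EuclideanSpace ℝ (Fin k) → EuclideanSpace ℝ (Fin k) :=
    fun u => (gauge D u)⁻¹ • u with hg
  set f : EuclideanSpace ℝ (Fin k) → EuclideanSpace ℝ (Fin k) :=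
    fun y => ξ + (gauge D (y - ξ))⁻¹ • (y - ξ) with hf
  -- covering of F by annuli
  have hcover : F ⊆ ⋃ j : ℕ, F ∩ ann k R ξ j := by
    intro y hy
    have hyne : y - ξ ≠ 0 := sub_ne_zero.2 (fun h => hξF (h ▸ hy))
    have hc0 : 0 < ‖y - ξ‖ := norm_pos_iff.2 hyne
    have hcR : ‖y - ξ‖ ≤ R := norm_sub_le_of_mem_unitCube hs (hFQ hy) (halfCube_subset hs hξh)
    obtain ⟨j, hj1, hj2⟩ := exists_ann hR0 hc0 hcR
    exact mem_iUnion.2 ⟨j, hy, hj1, hj2⟩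
  -- translation isometries
  have hisoadd : Isometry (fun u : EuclideanSpace ℝ (Fin k) => ξ + u) :=
    Isometry.of_dist_eq fun a b => dist_add_left ξ a b
  have hisosub : Isometry (fun y : EuclideanSpace ℝ (Fin k) => y - ξ) :=
    Isometry.of_dist_eq fun a b => dist_sub_right a b ξ
  -- per-annulus bound
  have hannbd : ∀ j : ℕ, μH[(d:ℝ)] (f '' (F ∩ ann k R ξ j))
      ≤ ENNReal.ofReal ((2*(1+4*Real.sqrt k))^d)
        * ((2:ℝ≥0∞)^(j*d) * μH[(d:ℝ)] (F ∩ ann k R ξ j)) := by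
    intro j
    set A : Set (EuclideanSpace ℝ (Fin k)) := F ∩ ann k R ξ j with hA
    set ρ : ℝ := R * (2⁻¹:ℝ)^(j+1) with hρ
    have hρ0 : 0 < ρ := mul_pos hR0 (pow_pos (by norm_num) _)
    have hr4 : 0 < s/4 := by linarith
    set L : ℝ≥0 := (R / ρ + R ^ 2 / ((s/4) * ρ)).toNNReal with hL
    have hlip : LipschitzOnWith L g {u : EuclideanSpace ℝ (Fin k) | ρ ≤ ‖u‖} :=
      radial_lipschitz (convex_cubeAt ξ) hr4 (ball_subset_cubeAt hξh) hR0
        (cubeAt_subset_closedBall hs hξh) hρ0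
    have hsubann : (fun y => y - ξ) '' A ⊆ {u : EuclideanSpace ℝ (Fin k) | ρ ≤ ‖u‖} := by
      rintro u ⟨y, hy, rfl⟩
      exact (hy.2.1).le
    have himg : f '' A = (fun u => ξ + u) '' (g '' ((fun y => y - ξ) '' A)) := by
      rw [image_image, image_image]
    rw [himg]
    rw [hisoadd.hausdorffMeasure_image (Or.inl hd0)]
    have h1 : μH[(d:ℝ)] (g '' ((fun y => y - ξ) '' A))
        ≤ (L : ℝ≥0∞) ^ (d:ℝ) * μH[(d:ℝ)] ((fun y => y - ξ) '' A) :=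
      (hlip.mono hsubann).hausdorffMeasure_image_le hd0
    rw [hisosub.hausdorffMeasure_image (Or.inl hd0)] at h1
    refine h1.trans ?_
    -- compute the Lipschitz constant
    have hLval : R / ρ + R ^ 2 / ((s/4) * ρ) = 2^(j+1) * (1 + 4*Real.sqrt k) := by
      have h2 : (2⁻¹:ℝ)^(j+1) = ((2:ℝ)^(j+1))⁻¹ := by rw [inv_pow]
      rw [hρ, hRdef, h2]
      have hp0 : (0:ℝ) < (2:ℝ)^(j+1) := by positivity
      field_simp
    have hLd : (L : ℝ≥0∞) ^ (d:ℝ)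
        = ENNReal.ofReal ((2*(1+4*Real.sqrt k))^d) * (2:ℝ≥0∞)^(j*d) := by
      have hc0 : (0:ℝ) ≤ 1 + 4*Real.sqrt k := by positivity
      have hco : (L : ℝ≥0∞) = ENNReal.ofReal (2^(j+1) * (1 + 4*Real.sqrt k)) := by
        rw [hL, hLval]; rfl
      rw [hco, ENNReal.rpow_natCast, ← ENNReal.ofReal_pow (by positivity)]
      have hval : ((2:ℝ)^(j+1) * (1 + 4*Real.sqrt k))^d
          = (2*(1+4*Real.sqrt k))^d * 2^(j*d) := by
        rw [show (2:ℝ)^(j+1) * (1 + 4*Real.sqrt k) = (2*(1+4*Real.sqrt k)) * 2^j by ring,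
          mul_pow, ← pow_mul]
      rw [hval, ENNReal.ofReal_mul (by positivity)]
      congr 1
      rw [ENNReal.ofReal_pow (by norm_num), ENNReal.ofReal_ofNat]
    rw [hLd, mul_assoc]
  -- sum up
  calc μH[(d:ℝ)] (f '' F) ≤ μH[(d:ℝ)] (f '' ⋃ j : ℕ, F ∩ ann k R ξ j) :=
        measure_mono (image_mono hcover)
  _ = μH[(d:ℝ)] (⋃ j : ℕ, f '' (F ∩ ann k R ξ j)) := by rw [image_iUnion]
  _ ≤ ∑' j : ℕ, μH[(d:ℝ)] (f '' (F ∩ ann k R ξ j)) := measure_iUnion_le _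
  _ ≤ ∑' j : ℕ, ENNReal.ofReal ((2*(1+4*Real.sqrt k))^d)
        * ((2:ℝ≥0∞)^(j*d) * μH[(d:ℝ)] (F ∩ ann k R ξ j)) :=
        ENNReal.tsum_le_tsum hannbd
  _ = ENNReal.ofReal ((2*(1+4*Real.sqrt k))^d)
        * ∑' j : ℕ, (2:ℝ≥0∞)^(j*d) * μH[(d:ℝ)] (F ∩ ann k R ξ j) :=
        ENNReal.tsum_mul_left

end ImageBound

end FFAux

namespace FFAux

variable {k d : ℕ} {s : ℝ}

lemma key_center (k d : ℕ) (hdk : d < k) {s : ℝ} (hs : 0 < s)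
    {F : Set (EuclideanSpace ℝ (Fin k))} (hFc : IsClosed F) (hFQ : F ⊆ unitCube k s)
    (hFm : μH[(d:ℝ)] F < ⊤) :
    ∃ ξ ∈ halfCube k s, ξ ∉ F ∧
      μH[(d:ℝ)] ((fun y => ξ + (gauge (cubeAt k s ξ) (y - ξ))⁻¹ • (y - ξ)) '' F)
        ≤ ENNReal.ofReal ((2*(1+4*Real.sqrt k))^d * (4^(k+1) * Real.sqrt k ^ k))
          * μH[(d:ℝ)] F := by
  obtain ⟨ξ, h1, h2, h3⟩ := exists_good_center hdk hs hFc.measurableSet hFQ hFm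
  refine ⟨ξ, h1, h2, ?_⟩
  refine (image_bound hdk hs hFQ h1 h2).trans ?_
  rw [ENNReal.ofReal_mul (by positivity), mul_assoc]
  exact mul_le_mul_right h3 _

lemma radial_eq (hs : 0 < s) {ξ y z : EuclideanSpace ℝ (Fin k)} (hξh : ξ ∈ halfCube k s)
    (hyξ : y ≠ ξ) (hz : z ∈ frontier (unitCube k s)) (hseg : y ∈ segment ℝ ξ z) :
    z = ξ + (gauge (cubeAt k s ξ) (y - ξ))⁻¹ • (y - ξ) := by
  set D : Set (EuclideanSpace ℝ (Fin k)) := cubeAt k s ξ with hD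
  have hconv : Convex ℝ D := convex_cubeAt ξ
  have hr4 : 0 < s/4 := by linarith
  have hnhds : D ∈ nhds (0 : EuclideanSpace ℝ (Fin k)) :=
    Filter.mem_of_superset (ball_mem_nhds 0 hr4) (ball_subset_cubeAt hξh)
  have hgz : gauge D (z - ξ) = 1 :=
    (gauge_eq_one_iff_mem_frontier hconv hnhds).2 (mem_frontier_cubeAt hz)
  obtain ⟨a, b, ha, hb, hab, hy⟩ := hseg
  have hyz : y - ξ = b • (z - ξ) := by
    rw [← hy, show a = 1 - b by linarith]
    module
  have hb0 : b ≠ 0 := by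
    intro h
    rw [h, zero_smul] at hyz
    exact hyξ (sub_eq_zero.1 hyz)
  have hgy : gauge D (y - ξ) = b := by
    rw [hyz, gauge_smul_of_nonneg hb, hgz, smul_eq_mul, mul_one]
  rw [hgy, hyz, smul_smul, inv_mul_cancel₀ hb0, one_smul, add_sub_cancel]

end FFAux

/-- Choice of a center for the radial projection in the Federer-Fleming construction. -/
theorem federer_fleming_center (n k d : ℕ) (hdk : d < k) (hkn : k ≤ n) :
    ∃ C : ℝ, 0 < C ∧
      ∀ (ι : EuclideanSpace ℝ (Fin k) →ᵃⁱ[ℝ] EuclideanSpace ℝ (Fin n)) (s : ℝ), 0 < s →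
        ∀ F : Set (EuclideanSpace ℝ (Fin n)), IsClosed F → F ⊆ ⇑ι '' unitCube k s → μH[(d:ℝ)] F < ⊤ →
          ∃ ξ ∈ (⇑ι '' halfCube k s) \ F,
            ∀ π : EuclideanSpace ℝ (Fin n) → EuclideanSpace ℝ (Fin n),
              (∀ y ∈ ⇑ι '' (unitCube k s), y ≠ ξ → π y ∈ ⇑ι '' (frontier (unitCube k s)) ∧ y ∈ segment ℝ ξ (π y)) →
              μH[(d:ℝ)] (π '' F) ≤ ENNReal.ofReal C * μH[(d:ℝ)] F := by
  have hk0 : 0 < k := lt_of_le_of_lt (Nat.zero_le d) hdk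
  have hsq : 0 < Real.sqrt k := Real.sqrt_pos.2 (by exact_mod_cast hk0)
  have hd0 : (0:ℝ) ≤ (d:ℝ) := by positivity
  refine ⟨(2*(1+4*Real.sqrt k))^d * (4^(k+1) * Real.sqrt k ^ k), by positivity, ?_⟩
  intro ι s hs F hFc hFQ hFm
  set F' : Set (EuclideanSpace ℝ (Fin k)) := ⇑ι ⁻¹' F with hF'
  have hF'c : IsClosed F' := hFc.preimage ι.continuous
  have hinj : Function.Injective ⇑ι := ι.injective
  have himgF : ⇑ι '' F' = F := by
    rw [hF', Set.image_preimage_eq_inter_range]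
    exact Set.inter_eq_self_of_subset_left (hFQ.trans (image_subset_range _ _))
  have hF'Q : F' ⊆ unitCube k s := by
    intro y hy
    obtain ⟨w, hw, hweq⟩ := hFQ hy
    rwa [← hinj hweq]
  have hμF : μH[(d:ℝ)] F' = μH[(d:ℝ)] F := by
    rw [← himgF, ι.isometry.hausdorffMeasure_image (Or.inl hd0)]
  have hF'm : μH[(d:ℝ)] F' < ⊤ := by rwa [hμF]
  obtain ⟨ξ', hξ'h, hξ'F, hbound⟩ := FFAux.key_center k d hdk hs hF'c hF'Q hF'm
  refine ⟨ι ξ', ⟨mem_image_of_mem _ hξ'h, fun hmem => hξ'F hmem⟩, ?_⟩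
  intro π hπ
  set ρfun : EuclideanSpace ℝ (Fin k) → EuclideanSpace ℝ (Fin k) :=
    fun y => ξ' + (gauge (FFAux.cubeAt k s ξ') (y - ξ'))⁻¹ • (y - ξ') with hρfun
  have hpoint : ∀ y' ∈ F', π (ι y') = ι (ρfun y') := by
    intro y' hy'
    have hyQ : ι y' ∈ ⇑ι '' unitCube k s := ⟨y', hF'Q hy', rfl⟩
    have hyne' : y' ≠ ξ' := fun h => hξ'F (h ▸ hy')
    have hyne : ι y' ≠ ι ξ' := fun h => hyne' (hinj h)
    obtain ⟨hfr, hseg⟩ := hπ (ι y') hyQ hyne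
    obtain ⟨z', hz', hz'eq⟩ := hfr
    rw [← hz'eq] at hseg
    have hseg' : y' ∈ segment ℝ ξ' z' := by
      have h1 : ⇑ι '' segment ℝ ξ' z' = segment ℝ (ι ξ') (ι z') := by
        have := image_segment ℝ ι.toAffineMap ξ' z'
        exact this
      rw [← h1] at hseg
      obtain ⟨w, hw, hweq⟩ := hseg
      rwa [← hinj hweq]
    have hz'val : z' = ρfun y' := FFAux.radial_eq hs hξ'h hyne' hz' hseg'
    rw [← hz'eq, hz'val]
  have himgπ : π '' F = ⇑ι '' (ρfun '' F') := by
    calc π '' F = π '' (⇑ι '' F') := by rw [himgF]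
    _ = (fun y' => π (ι y')) '' F' := by rw [image_image]
    _ = (fun y' => ι (ρfun y')) '' F' := image_congr hpoint
    _ = ⇑ι '' (ρfun '' F') := by rw [image_image]
  rw [himgπ, ι.isometry.hausdorffMeasure_image (Or.inl hd0), ← hμF]
  exact hbound

end
end
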